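/- Fix constants C, L, λ, M > 0 and choose δ̄ ∈ (0, 1) with δ̄ < 1. Let 0 < φ ≤ 1 (interpreted as ψⁿ(A) − ψ_LD(A)), let TOL(D) = δ̄λCD²/(4L(D+M)) and let p = DOWN/(DOWN + M·TOL) with DOWN(D) = D/2 evaluated at any D ∈ (0, φ]. Then (C/2)·φ − (1/λ)(TOL(φ)·L·(1+p) + L(1−p)) ≥ (C(1−δ̄)/2)·φ > 0, where 1 − p ≤ δ̄λMC/(2L + 2LM·φ^{−1}). -/

import Mathlib

/-!
Write `T = TOL` (`tolerance`) and `B(x) = δ̄λMC/(2L) · x/(x + M)` (`slackBound`). Since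
`1 - p = M·T(D)/(D/2 + M·T(D)) ≤ M·T(D)/(D/2) = B(D)` and `x ↦ x/(x + M)` is increasing,
`1 - p ≤ B(φ)`, which is the claimed bound. Bounding `1 + p ≤ 2`, the loss term is then at most
`(L/λ)(2T(φ) + B(φ))`, and the two summands add up exactly to `(L/λ) · δ̄λCφ/(2L) = δ̄Cφ/2`.
-/

theorem one_sub_div_add_le_div {a b : ℝ} (ha : 0 < a) (hb : 0 ≤ b) :
    1 - a / (a + b) ≤ b / a := by
  rw [one_sub_div (by positivity), add_sub_cancel_left]
  exact div_le_div_of_nonneg_left hb ha (by linarith)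

theorem div_add_le_div_add {x y M : ℝ} (hM : 0 ≤ M) (hx : 0 < x) (hxy : x ≤ y) :
    x / (x + M) ≤ y / (y + M) := by
  rw [div_le_div_iff₀ (by positivity) (by linarith)]
  nlinarith

section Tolerance

variable {δbar lam C L M : ℝ}

variable (δbar lam C L M) in
noncomputable def tolerance (x : ℝ) : ℝ := δbar * lam * C * x ^ 2 / (4 * L * (x + M))

variable (δbar lam C L M) in
noncomputable def slackBound (x : ℝ) : ℝ := δbar * lam * M * C / (2 * L) * (x / (x + M))

theorem tolerance_nonneg (hδ : 0 ≤ δbar) (hlam : 0 ≤ lam) (hC : 0 ≤ C) (hL : 0 ≤ L)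
    {x : ℝ} (hxM : 0 ≤ x + M) : 0 ≤ tolerance δbar lam C L M x := by
  unfold tolerance
  positivity

theorem mul_tolerance_div_half {x : ℝ} (hL : L ≠ 0) (hx : x ≠ 0) (hxM : x + M ≠ 0) :
    M * tolerance δbar lam C L M x / (x / 2) = slackBound δbar lam C L M x := by
  unfold tolerance slackBound
  field_simp
  ring

theorem two_mul_tolerance_add_slackBound {x : ℝ} (hL : L ≠ 0) (hxM : x + M ≠ 0) :
    2 * tolerance δbar lam C L M x + slackBound δbar lam C L M x
      = δbar * lam * C * x / (2 * L) := by
  unfold tolerance slackBound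
  field_simp
  ring

theorem slackBound_eq {x : ℝ} (hL : L ≠ 0) (hx : x ≠ 0) (hxM : x + M ≠ 0) :
    slackBound δbar lam C L M x = δbar * lam * M * C / (2 * L + 2 * L * M / x) := by
  unfold slackBound
  field_simp

theorem slackBound_mono (hδ : 0 ≤ δbar) (hlam : 0 ≤ lam) (hC : 0 ≤ C) (hL : 0 ≤ L)
    (hM : 0 ≤ M) {x y : ℝ} (hx : 0 < x) (hxy : x ≤ y) :
    slackBound δbar lam C L M x ≤ slackBound δbar lam C L M y := by
  unfold slackBound
  exact mul_le_mul_of_nonneg_left (div_add_le_div_add hM hx hxy) (by positivity)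

theorem one_sub_half_div_le_slackBound (hδ : 0 ≤ δbar) (hlam : 0 ≤ lam) (hC : 0 ≤ C)
    (hL : 0 < L) (hM : 0 < M) {D φ : ℝ} (hD : 0 < D) (hDφ : D ≤ φ) :
    1 - D / 2 / (D / 2 + M * tolerance δbar lam C L M D) ≤ slackBound δbar lam C L M φ := calc
  _ ≤ M * tolerance δbar lam C L M D / (D / 2) :=
    one_sub_div_add_le_div (by positivity)
      (mul_nonneg hM.le (tolerance_nonneg hδ hlam hC hL.le (by positivity)))
  _ = slackBound δbar lam C L M D := by rw [mul_tolerance_div_half] <;> positivity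
  _ ≤ slackBound δbar lam C L M φ := slackBound_mono hδ hlam hC hL.le hM.le hD hDφ

theorem tolerance_loss_le (hδ : 0 ≤ δbar) (hlam : 0 < lam) (hC : 0 ≤ C) (hL : 0 < L)
    {x p : ℝ} (hxM : 0 < x + M) (hp : p ≤ 1) (hslack : 1 - p ≤ slackBound δbar lam C L M x) :
    (1 / lam) * (tolerance δbar lam C L M x * L * (1 + p) + L * (1 - p))
      ≤ δbar * C * x / 2 := by
  have hT := tolerance_nonneg hδ hlam.le hC hL.le hxM.le (x := x)
  calc
    _ ≤ (1 / lam) * (L * (2 * tolerance δbar lam C L M x + slackBound δbar lam C L M x)) := by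
      have h2 : L * (1 - p) ≤ L * slackBound δbar lam C L M x := by gcongr
      have h1 : tolerance δbar lam C L M x * L * (1 + p)
          ≤ tolerance δbar lam C L M x * L * 2 := by
        gcongr
        linarith
      gcongr
      linarith
    _ = δbar * C * x / 2 := by
      rw [two_mul_tolerance_add_slackBound hL.ne' hxM.ne']
      field_simp

end Tolerance

theorem contagion_inequality_general
    (lam C L M δbar φ D : ℝ) (hlam : 0 < lam) (hC : 0 < C) (hL : 0 < L) (hM : 0 < M)
    (hδ0 : 0 < δbar) (hδ1 : δbar < 1)
    (hφ0 : 0 < φ) (hD0 : 0 < D) (hDφ : D ≤ φ) :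
    let TOL : ℝ → ℝ := fun x => δbar * lam * C * x ^ 2 / (4 * L * (x + M))
    let p : ℝ := (D / 2) / (D / 2 + M * TOL D)
    1 - p ≤ δbar * lam * M * C / (2 * L + 2 * L * M / φ) ∧
    (C / 2) * φ - (1 / lam) * (TOL φ * L * (1 + p) + L * (1 - p))
      ≥ (C * (1 - δbar) / 2) * φ ∧
    (C * (1 - δbar) / 2) * φ > 0 := by
  intro TOL p
  have hp : p ≤ 1 :=
    have hle : D / 2 ≤ D / 2 + M * tolerance δbar lam C L M D :=
      le_add_of_nonneg_right <|
        mul_nonneg hM.le (tolerance_nonneg hδ0.le hlam.le hC.le hL.le (by positivity))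
    div_le_one_of_le₀ hle ((by positivity : (0 : ℝ) ≤ D / 2).trans hle)
  have hslack : 1 - p ≤ slackBound δbar lam C L M φ :=
    one_sub_half_div_le_slackBound hδ0.le hlam.le hC.le hL hM hD0 hDφ
  refine ⟨?_, ?_, ?_⟩
  · rwa [slackBound_eq hL.ne' hφ0.ne' (by positivity)] at hslack
  · change C / 2 * φ - 1 / lam * (tolerance δbar lam C L M φ * L * (1 + p) + L * (1 - p)) ≥ _
    have := tolerance_loss_le hδ0.le hlam hC.le hL (by positivity) hp hslack
    linarith
  · have : 0 < 1 - δbar := by linarith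
    positivity

/-- Key contagion inequality: with `TOL(D) = δ̄λCD²/(4L(D+M))`, `DOWN(D) = D/2` and
`p = DOWN(D)/(DOWN(D) + M·TOL(D))` for any `D ∈ (0, φ]`, the lower bound on the payoff
gain from action 1 stays strictly positive:
`(C/2)φ − (1/λ)(TOL(φ)·L·(1+p) + L(1−p)) ≥ (C(1−δ̄)/2)φ > 0`, and moreover
`1 − p ≤ δ̄λMC/(2L + 2LM/φ)`. -/
theorem contagion_inequality
    (lam C L M δbar φ D : ℝ) (hlam : 0 < lam) (hC : 0 < C) (hL : 0 < L) (hM : 0 < M)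
    (hδ0 : 0 < δbar) (hδ1 : δbar < 1)
    (hφ0 : 0 < φ) (hφ1 : φ ≤ 1) (hD0 : 0 < D) (hDφ : D ≤ φ) :
    let TOL : ℝ → ℝ := fun x => δbar * lam * C * x ^ 2 / (4 * L * (x + M))
    let p : ℝ := (D / 2) / (D / 2 + M * TOL D)
    1 - p ≤ δbar * lam * M * C / (2 * L + 2 * L * M / φ) ∧
    (C / 2) * φ - (1 / lam) * (TOL φ * L * (1 + p) + L * (1 - p))
      ≥ (C * (1 - δbar) / 2) * φ ∧
    (C * (1 - δbar) / 2) * φ > 0 :=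
  contagion_inequality_general lam C L M δbar φ D hlam hC hL hM hδ0 hδ1 hφ0 hD0 hDφ
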